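/- arXiv:2605.19396 — 10 statements merged into one kernel-verified Lean document; each statement's English description precedes it below -/
import Mathlib

section
/- Let W be an N×N real symmetric doubly stochastic matrix with ρ := ‖W − J‖₂, and let f₁,…,f_N : ℝ^d → ℝ be differentiable with L₁-Lipschitz gradients. Let X = (x₁,…,x_N) and X' = (x₁',…,x_N') be stacked vectors in (ℝ^d)^N, let G̃ = (g̃₁,…,g̃_N) be a stacked vector in (ℝ^d)^N, and let Δ be the stacked vector with blocks Δᵢ := ∇fᵢ(xᵢ') − ∇fᵢ(xᵢ). Then for every integer m ≥ 1, D((Wᵐ ⊗ I_d)(G̃ + Δ)) ≤ ρᵐ·(D(G̃) + (L₁/√N)·‖X' − X‖), where ‖X' − X‖ := (∑ᵢ‖xᵢ' − xᵢ‖²)^{1/2}. -/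
open scoped BigOperators

/-- RMS dispersion of a stacked vector `Z = (z₁,…,z_N)`. -/
noncomputable def disp {N d : ℕ} (Z : Fin N → EuclideanSpace ℝ (Fin d)) : ℝ :=
  Real.sqrt ((N : ℝ)⁻¹ * ∑ i, ‖Z i - (N : ℝ)⁻¹ • ∑ j, Z j‖ ^ 2)

/-- The stacked vector `(A ⊗ I_d)Z` with `i`-th block `∑ⱼ Aᵢⱼ zⱼ`. -/
noncomputable def mix {N d : ℕ} (A : Matrix (Fin N) (Fin N) ℝ)
    (Z : Fin N → EuclideanSpace ℝ (Fin d)) : Fin N → EuclideanSpace ℝ (Fin d) :=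
  fun i => ∑ j, A i j • Z j

/-- Stacked Euclidean norm `‖S‖ = sqrt(∑ᵢ ‖sᵢ‖²)`. -/
noncomputable def stackNorm {N d : ℕ} (S : Fin N → EuclideanSpace ℝ (Fin d)) : ℝ :=
  Real.sqrt (∑ i, ‖S i‖ ^ 2)

/-!
Because `W` is doubly stochastic, mixing commutes with averaging: the centred part of
`(W ⊗ I) Z` is `((W - J) ⊗ I)` applied to the centred part of `Z`. The matrix `(W - J) ⊗ I`
acts on each of the `d` coordinate columns separately, so it contracts the stacked norm by
`ρ`, and iterating gives `D((Wᵐ ⊗ I) Z) ≤ ρᵐ D(Z)`. Finally `D` is subadditive and centring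
does not increase the stacked norm, so `D(Δ) ≤ ‖Δ‖ / √N ≤ L₁ ‖X' - X‖ / √N`.
-/

noncomputable def avgMatrix (n : Type*) [Fintype n] : Matrix n n ℝ :=
  (Fintype.card n : ℝ)⁻¹ • Matrix.of fun _ _ => 1

section AvgMatrix

variable {n : Type*} [Fintype n]

theorem mul_avgMatrix_of_sum_row {A : Matrix n n ℝ} (hA : ∀ i, ∑ j, A i j = 1) :
    A * avgMatrix n = avgMatrix n := by
  ext i j
  simp [avgMatrix, Matrix.mul_apply, ← Finset.sum_mul, hA]

theorem avgMatrix_mul_of_sum_col {A : Matrix n n ℝ} (hA : ∀ j, ∑ i, A i j = 1) :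
    avgMatrix n * A = avgMatrix n := by
  ext i j
  simp [avgMatrix, Matrix.mul_apply, ← Finset.mul_sum, hA]

theorem sum_avgMatrix_row (i : n) : ∑ j, avgMatrix n i j = 1 := by
  have : Nonempty n := ⟨i⟩
  simp [avgMatrix, Fintype.card_ne_zero]

theorem avgMatrix_mul_self : avgMatrix n * avgMatrix n = avgMatrix n :=
  mul_avgMatrix_of_sum_row sum_avgMatrix_row

end AvgMatrix

theorem sum_norm_sub_average_sq_le {ι E : Type*} [Fintype ι] [NormedAddCommGroup E]
    [InnerProductSpace ℝ E] (z : ι → E) :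
    ∑ i, ‖z i - (Fintype.card ι : ℝ)⁻¹ • ∑ j, z j‖ ^ 2 ≤ ∑ i, ‖z i‖ ^ 2 := by
  set c := (Fintype.card ι : ℝ)⁻¹ • ∑ j, z j
  have hsum : ∑ i, (z i - c) = 0 := by
    rcases isEmpty_or_nonempty ι with _ | _
    · simp
    · rw [Finset.sum_sub_distrib, Finset.sum_const, Finset.card_univ, ← Nat.cast_smul_eq_nsmul ℝ,
        smul_smul, mul_inv_cancel₀ (Nat.cast_ne_zero.mpr Fintype.card_ne_zero), one_smul, sub_self]
  have hsplit : ∑ i, ‖z i‖ ^ 2 = ∑ i, ‖z i - c‖ ^ 2 + Fintype.card ι * ‖c‖ ^ 2 := by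
    have hexpand : ∀ i, ‖z i‖ ^ 2 = ‖z i - c‖ ^ 2 + 2 * inner ℝ (z i - c) c + ‖c‖ ^ 2 := fun i => by
      rw [← norm_add_sq_real, sub_add_cancel]
    simp only [hexpand, Finset.sum_add_distrib, ← Finset.mul_sum, ← sum_inner, hsum, inner_zero_left]
    simp
  rw [hsplit]
  nlinarith [sq_nonneg ‖c‖, Nat.cast_nonneg (α := ℝ) (Fintype.card ι)]

section Stacked

variable {N d : ℕ}

noncomputable def center (Z : Fin N → EuclideanSpace ℝ (Fin d)) :
    Fin N → EuclideanSpace ℝ (Fin d) :=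
  fun i => Z i - (N : ℝ)⁻¹ • ∑ j, Z j

theorem mix_mul (A B : Matrix (Fin N) (Fin N) ℝ) (Z : Fin N → EuclideanSpace ℝ (Fin d)) :
    mix (A * B) Z = mix A (mix B Z) := by
  ext1 i
  simp only [mix, Matrix.mul_apply, Finset.sum_smul, Finset.smul_sum, smul_smul]
  exact Finset.sum_comm

theorem mix_one (Z : Fin N → EuclideanSpace ℝ (Fin d)) : mix 1 Z = Z := by
  ext1 i
  simp [mix, Matrix.one_apply]

theorem center_eq_mix (Z : Fin N → EuclideanSpace ℝ (Fin d)) :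
    center Z = mix (1 - avgMatrix (Fin N)) Z := by
  ext1 i
  simp [center, mix, sub_smul, Matrix.one_apply, avgMatrix, Finset.smul_sum]

theorem center_mix {W : Matrix (Fin N) (Fin N) ℝ} (hrow : ∀ i, ∑ j, W i j = 1)
    (hcol : ∀ j, ∑ i, W i j = 1) (Z : Fin N → EuclideanSpace ℝ (Fin d)) :
    center (mix W Z) = mix (W - avgMatrix (Fin N)) (center Z) := by
  have hleft : (1 - avgMatrix (Fin N)) * W = W - avgMatrix (Fin N) := by
    rw [Matrix.sub_mul, one_mul, avgMatrix_mul_of_sum_col hcol]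
  have hright : (W - avgMatrix (Fin N)) * (1 - avgMatrix (Fin N)) = W - avgMatrix (Fin N) := by
    rw [Matrix.mul_sub, mul_one, Matrix.sub_mul, mul_avgMatrix_of_sum_row hrow,
      avgMatrix_mul_self, sub_self, sub_zero]
  rw [center_eq_mix, center_eq_mix, ← mix_mul, ← mix_mul, hleft, hright]

theorem center_add (S T : Fin N → EuclideanSpace ℝ (Fin d)) :
    center (S + T) = center S + center T := by
  rw [center_eq_mix, center_eq_mix, center_eq_mix]
  ext1 i
  simp [mix, smul_add, Finset.sum_add_distrib]

theorem stackNorm_eq_norm_toLp (S : Fin N → EuclideanSpace ℝ (Fin d)) :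
    stackNorm S = ‖WithLp.toLp 2 S‖ :=
  (PiLp.norm_eq_of_L2 _).symm

theorem stackNorm_nonneg (S : Fin N → EuclideanSpace ℝ (Fin d)) : 0 ≤ stackNorm S :=
  Real.sqrt_nonneg _

theorem stackNorm_add_le (S T : Fin N → EuclideanSpace ℝ (Fin d)) :
    stackNorm (S + T) ≤ stackNorm S + stackNorm T := by
  simpa only [stackNorm_eq_norm_toLp, WithLp.toLp_add] using norm_add_le _ _

theorem stackNorm_center_le (Z : Fin N → EuclideanSpace ℝ (Fin d)) :
    stackNorm (center Z) ≤ stackNorm Z := by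
  apply Real.sqrt_le_sqrt
  simpa [center] using sum_norm_sub_average_sq_le Z

theorem stackNorm_le_mul_of_norm_le {L : ℝ} {S T : Fin N → EuclideanSpace ℝ (Fin d)}
    (h : ∀ i, ‖S i‖ ≤ L * ‖T i‖) : stackNorm S ≤ L * stackNorm T := by
  rcases lt_or_ge L 0 with hL | hL
  · have hzero : ∀ i, S i = 0 ∧ T i = 0 := fun i => by
      have := h i
      constructor <;> apply norm_le_zero_iff.mp <;> nlinarith [norm_nonneg (S i), norm_nonneg (T i)]
    simp [stackNorm, hzero]
  · refine le_of_sq_le_sq ?_ (mul_nonneg hL (stackNorm_nonneg T))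
    rw [mul_pow, stackNorm, stackNorm, Real.sq_sqrt (by positivity), Real.sq_sqrt (by positivity),
      Finset.mul_sum]
    gcongr with i
    rw [← mul_pow]
    exact pow_le_pow_left₀ (norm_nonneg _) (h i) 2

def column (Z : Fin N → EuclideanSpace ℝ (Fin d)) (k : Fin d) : EuclideanSpace ℝ (Fin N) :=
  WithLp.toLp 2 fun i => Z i k

theorem stackNorm_sq_eq_sum_column (Z : Fin N → EuclideanSpace ℝ (Fin d)) :
    stackNorm Z ^ 2 = ∑ k, ‖column Z k‖ ^ 2 := by
  simp only [stackNorm_eq_norm_toLp, PiLp.norm_sq_eq_of_L2]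
  exact Finset.sum_comm

theorem column_mix (A : Matrix (Fin N) (Fin N) ℝ) (Z : Fin N → EuclideanSpace ℝ (Fin d))
    (k : Fin d) : column (mix A Z) k = Matrix.toEuclideanCLM (𝕜 := ℝ) A (column Z k) := by
  ext i
  simp [column, mix, Matrix.toEuclideanCLM_toLp, Matrix.mulVec, dotProduct]

theorem stackNorm_mix_le (A : Matrix (Fin N) (Fin N) ℝ) (Z : Fin N → EuclideanSpace ℝ (Fin d)) :
    stackNorm (mix A Z) ≤ ‖Matrix.toEuclideanCLM (𝕜 := ℝ) A‖ * stackNorm Z := by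
  refine le_of_sq_le_sq ?_ (mul_nonneg (norm_nonneg _) (stackNorm_nonneg Z))
  rw [mul_pow, stackNorm_sq_eq_sum_column, stackNorm_sq_eq_sum_column, Finset.mul_sum]
  gcongr with k
  rw [column_mix, ← mul_pow]
  exact pow_le_pow_left₀ (norm_nonneg _) ((Matrix.toEuclideanCLM (𝕜 := ℝ) A).le_opNorm _) 2

theorem disp_eq_inv_sqrt_mul_stackNorm_center (Z : Fin N → EuclideanSpace ℝ (Fin d)) :
    disp Z = (Real.sqrt N)⁻¹ * stackNorm (center Z) := by
  rw [disp, stackNorm, Real.sqrt_mul (by positivity), Real.sqrt_inv]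
  rfl

theorem disp_add_le (S T : Fin N → EuclideanSpace ℝ (Fin d)) :
    disp (S + T) ≤ disp S + disp T := by
  simp only [disp_eq_inv_sqrt_mul_stackNorm_center, center_add, ← mul_add]
  gcongr
  exact stackNorm_add_le _ _

theorem disp_le_inv_sqrt_mul_stackNorm (Z : Fin N → EuclideanSpace ℝ (Fin d)) :
    disp Z ≤ (Real.sqrt N)⁻¹ * stackNorm Z := by
  rw [disp_eq_inv_sqrt_mul_stackNorm_center]
  gcongr
  exact stackNorm_center_le Z

theorem disp_mix_le {W : Matrix (Fin N) (Fin N) ℝ} (hrow : ∀ i, ∑ j, W i j = 1)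
    (hcol : ∀ j, ∑ i, W i j = 1) (Z : Fin N → EuclideanSpace ℝ (Fin d)) :
    disp (mix W Z) ≤ ‖Matrix.toEuclideanCLM (𝕜 := ℝ) (W - avgMatrix (Fin N))‖ * disp Z := by
  rw [disp_eq_inv_sqrt_mul_stackNorm_center, disp_eq_inv_sqrt_mul_stackNorm_center,
    center_mix hrow hcol, mul_left_comm]
  gcongr
  exact stackNorm_mix_le _ _

theorem disp_mix_pow_le {W : Matrix (Fin N) (Fin N) ℝ} (hrow : ∀ i, ∑ j, W i j = 1)
    (hcol : ∀ j, ∑ i, W i j = 1) (Z : Fin N → EuclideanSpace ℝ (Fin d)) (m : ℕ) :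
    disp (mix (W ^ m) Z) ≤
      ‖Matrix.toEuclideanCLM (𝕜 := ℝ) (W - avgMatrix (Fin N))‖ ^ m * disp Z := by
  induction m with
  | zero => rw [pow_zero, pow_zero, mix_one, one_mul]
  | succ m ih =>
    rw [pow_succ', mix_mul, pow_succ', mul_assoc]
    exact (disp_mix_le hrow hcol _).trans (by gcongr)

end Stacked

theorem stmt4_general {N d : ℕ}
    (W : Matrix (Fin N) (Fin N) ℝ)
    (hrow : ∀ i, ∑ j, W i j = 1)
    (hcol : ∀ j, ∑ i, W i j = 1)
    (J : Matrix (Fin N) (Fin N) ℝ)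
    (hJ : J = (N : ℝ)⁻¹ • Matrix.of (fun _ _ => (1 : ℝ)))
    (ρ : ℝ) (hρ : ρ = ‖Matrix.toEuclideanCLM (𝕜 := ℝ) (W - J)‖)
    (L₁ : ℝ) (f : Fin N → EuclideanSpace ℝ (Fin d) → ℝ)
    (hLip : ∀ i, ∀ x y : EuclideanSpace ℝ (Fin d),
      ‖gradient (f i) x - gradient (f i) y‖ ≤ L₁ * ‖x - y‖)
    (X X' G : Fin N → EuclideanSpace ℝ (Fin d))
    (m : ℕ) :
    disp (mix (W ^ m) (G + fun i => gradient (f i) (X' i) - gradient (f i) (X i)))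
      ≤ ρ ^ m * (disp G + (L₁ / Real.sqrt N) * stackNorm (X' - X)) := by
  have hJ_avg : J = avgMatrix (Fin N) := by rw [hJ, avgMatrix, Fintype.card_fin]
  subst hJ_avg
  have hρ0 : 0 ≤ ρ := hρ ▸ norm_nonneg _
  set Δ : Fin N → EuclideanSpace ℝ (Fin d) :=
    fun i => gradient (f i) (X' i) - gradient (f i) (X i)
  have hΔ : disp Δ ≤ L₁ / Real.sqrt N * stackNorm (X' - X) :=
    calc disp Δ ≤ (Real.sqrt N)⁻¹ * stackNorm Δ := disp_le_inv_sqrt_mul_stackNorm Δ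
      _ ≤ (Real.sqrt N)⁻¹ * (L₁ * stackNorm (X' - X)) := by
        gcongr
        exact stackNorm_le_mul_of_norm_le fun i => hLip i (X' i) (X i)
      _ = L₁ / Real.sqrt N * stackNorm (X' - X) := by ring
  calc disp (mix (W ^ m) (G + Δ))
      ≤ ρ ^ m * disp (G + Δ) := hρ ▸ disp_mix_pow_le hrow hcol _ m
    _ ≤ ρ ^ m * (disp G + disp Δ) := by gcongr; exact disp_add_le G Δ
    _ ≤ ρ ^ m * (disp G + L₁ / Real.sqrt N * stackNorm (X' - X)) := by gcongr

/-- gradient-tracker dispersion recursion: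
with `Δᵢ = ∇fᵢ(xᵢ') − ∇fᵢ(xᵢ)`,
`D((Wᵐ ⊗ I_d)(G̃ + Δ)) ≤ ρᵐ·(D(G̃) + (L₁/√N)·‖X' − X‖)`. -/
theorem stmt4 {N d : ℕ} (hN : 0 < N)
    (W : Matrix (Fin N) (Fin N) ℝ)
    (hsymm : W.IsSymm)
    (hnonneg : ∀ i j, 0 ≤ W i j)
    (hrow : ∀ i, ∑ j, W i j = 1)
    (hcol : ∀ j, ∑ i, W i j = 1)
    (J : Matrix (Fin N) (Fin N) ℝ)
    (hJ : J = (N : ℝ)⁻¹ • Matrix.of (fun _ _ => (1 : ℝ)))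
    (ρ : ℝ) (hρ : ρ = ‖Matrix.toEuclideanCLM (𝕜 := ℝ) (W - J)‖)
    (L₁ : ℝ) (f : Fin N → EuclideanSpace ℝ (Fin d) → ℝ)
    (hdiff : ∀ i, Differentiable ℝ (f i))
    (hLip : ∀ i, ∀ x y : EuclideanSpace ℝ (Fin d),
      ‖gradient (f i) x - gradient (f i) y‖ ≤ L₁ * ‖x - y‖)
    (X X' G : Fin N → EuclideanSpace ℝ (Fin d))
    (m : ℕ) (hm : 1 ≤ m) :
    disp (mix (W ^ m) (G + fun i => gradient (f i) (X' i) - gradient (f i) (X i)))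
      ≤ ρ ^ m * (disp G + (L₁ / Real.sqrt N) * stackNorm (X' - X)) :=
  stmt4_general W hrow hcol J hJ ρ hρ L₁ f hLip X X' G m
end

section
/- Let H be a d×d real symmetric matrix, g ∈ ℝ^d with g ≠ 0, and M > 0. Set λ := √(M‖g‖) and δ := max{0, −λ_min(H)}, where λ_min(H) is the smallest eigenvalue of H. If s ∈ ℝ^d satisfies (H + (λ + δ)I)s = −g, then λ‖s‖ ≤ ‖g‖; consequently ‖s‖ ≤ √(‖g‖/M) and M‖s‖ ≤ λ. -/
/-!
Since `δ ≥ -λ_min(H)`, the matrix `H + δI` is positive semidefinite, so pairing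
`(H + δI)s + λs = -g` with `s` gives `λ‖s‖² ≤ -⟪g, s⟫ ≤ ‖g‖‖s‖`. Squaring `λ‖s‖ ≤ ‖g‖` and using
`λ² = M‖g‖` gives `M‖s‖² ≤ ‖g‖`, from which the other two bounds follow.
-/

open scoped ComplexOrder Pointwise in
theorem Matrix.IsHermitian.posSemidef_add_smul_one {𝕜 n : Type*} [RCLike 𝕜] [Fintype n]
    [DecidableEq n] {A : Matrix n n 𝕜} (hA : A.IsHermitian) {c : ℝ}
    (hc : ∀ i, 0 ≤ hA.eigenvalues i + c) : (A + c • (1 : Matrix n n 𝕜)).PosSemidef := by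
  have hAc : (A + c • (1 : Matrix n n 𝕜)).IsHermitian :=
    hA.add (by simp [Matrix.IsHermitian, Matrix.conjTranspose_smul])
  have hspec :
      spectrum ℝ (A + c • (1 : Matrix n n 𝕜)) = Set.range hA.eigenvalues + ({c} : Set ℝ) := by
    rw [← Algebra.algebraMap_eq_smul_one, ← spectrum.add_singleton_eq,
      hA.spectrum_real_eq_range_eigenvalues]
  refine hAc.posSemidef_iff_eigenvalues_nonneg.mpr fun i ↦ ?_
  obtain ⟨_, ⟨j, rfl⟩, _, rfl, hj⟩ := hspec ▸ hAc.eigenvalues_mem_spectrum_real i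
  exact hj ▸ hc j

theorem mul_norm_le_norm_of_isPositive_add_smul_eq {E : Type*} [NormedAddCommGroup E]
    [InnerProductSpace ℝ E] {T : E →ₗ[ℝ] E} (hT : T.IsPositive) {c : ℝ} {s g : E}
    (hs : T s + c • s = g) : c * ‖s‖ ≤ ‖g‖ := by
  rcases (norm_nonneg s).eq_or_lt with hs0 | hs0
  · simp [← hs0]
  have hquad : c * ‖s‖ ^ 2 ≤ ‖g‖ * ‖s‖ := calc
    c * ‖s‖ ^ 2 ≤ inner ℝ (T s) s + c * ‖s‖ ^ 2 := le_add_of_nonneg_left (hT.inner_nonneg_left s)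
    _ = inner ℝ g s := by
      rw [← hs, inner_add_left, real_inner_smul_left, real_inner_self_eq_norm_sq]
    _ ≤ ‖g‖ * ‖s‖ := real_inner_le_norm g s
  nlinarith

theorem mul_sq_le_of_sqrt_mul_mul_le {M a x : ℝ} (hM : 0 ≤ M) (ha : 0 < a) (hx : 0 ≤ x)
    (h : √(M * a) * x ≤ a) : M * x ^ 2 ≤ a := by
  have hsq : M * a * x ^ 2 ≤ a ^ 2 := by
    rw [← Real.sq_sqrt (by positivity : 0 ≤ M * a), ← mul_pow]
    exact pow_le_pow_left₀ (by positivity) h 2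
  nlinarith

/-- uniform local step bound.
With `λ = √(M‖g‖)`, `δ = max{0, −λ_min(H)}`, and `(H + (λ+δ)I)s = −g`, one has
`λ‖s‖ ≤ ‖g‖`, `‖s‖ ≤ √(‖g‖/M)` and `M‖s‖ ≤ λ`. -/
theorem stmt6 {d : ℕ} (H : Matrix (Fin d) (Fin d) ℝ) (hH : H.IsHermitian)
    (g s : EuclideanSpace ℝ (Fin d)) (hg : g ≠ 0)
    (M : ℝ) (hM : 0 < M)
    (lam δ : ℝ)
    (hlam : lam = Real.sqrt (M * ‖g‖))
    (hδ : δ = max 0 (-(⨅ i, hH.eigenvalues i)))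
    (hs : Matrix.toEuclideanCLM (𝕜 := ℝ) (H + (lam + δ) • (1 : Matrix (Fin d) (Fin d) ℝ)) s
      = -g) :
    lam * ‖s‖ ≤ ‖g‖ ∧ ‖s‖ ≤ Real.sqrt (‖g‖ / M) ∧ M * ‖s‖ ≤ lam := by
  have hshift (i : Fin d) : 0 ≤ hH.eigenvalues i + δ := by
    have := ciInf_le (Finite.bddBelow_range hH.eigenvalues) i
    linarith [hδ ▸ le_max_right 0 (-(⨅ i, hH.eigenvalues i))]
  have hpos : (Matrix.toEuclideanLin (H + δ • 1)).IsPositive :=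
    Matrix.isPositive_toEuclideanLin_iff.mpr (hH.posSemidef_add_smul_one hshift)
  have hsplit : Matrix.toEuclideanLin (H + δ • 1) s + lam • s = -g := by
    rw [add_comm lam, add_smul, ← add_assoc, map_add, map_smul, map_one] at hs
    -- `toEuclideanCLM A` is `toEuclideanLin A` up to definitional unfolding
    exact hs
  have hstep : lam * ‖s‖ ≤ ‖g‖ := by
    simpa using mul_norm_le_norm_of_isPositive_add_smul_eq hpos hsplit
  have hMs : M * ‖s‖ ^ 2 ≤ ‖g‖ :=
    mul_sq_le_of_sqrt_mul_mul_le hM.le (norm_pos_iff.2 hg) (norm_nonneg s) (hlam ▸ hstep)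
  refine ⟨hstep, ?_, ?_⟩
  · rw [Real.le_sqrt (norm_nonneg s) (by positivity), le_div_iff₀ hM]
    linarith
  · rw [hlam, Real.le_sqrt (by positivity) (by positivity)]
    nlinarith
end

section
/- For i = 1,…,N let Aᵢ := Hᵢ + λ̃ᵢ·I, where Hᵢ is a d×d real symmetric matrix and λ̃ᵢ > 0 are reals, and set H̄ := (1/N)∑ᵢ Hᵢ, λ̄ := (1/N)∑ᵢ λ̃ᵢ, A := H̄ + λ̄·I, and μ := minᵢ λ̃ᵢ. Assume Aᵢ ⪰ μ·I for every i and A ⪰ λ̄·I (so all these matrices are invertible). Let g₁,…,g_N ∈ ℝ^d with average ḡ := (1/N)∑ᵢ gᵢ, and define sᵢ := −Aᵢ⁻¹gᵢ and s_ref := −A⁻¹ḡ. Then ‖(1/N)∑ᵢ sᵢ − s_ref‖ ≤ (1/μ)·Δᵍ + (‖ḡ‖/(μ·λ̄))·(Δᴴ + Δᴸ), where Δᵍ := (1/N)∑ᵢ‖gᵢ − ḡ‖, Δᴴ := (1/N)∑ᵢ‖Hᵢ − H̄‖₂, and Δᴸ := (1/N)∑ᵢ|λ̃ᵢ − λ̄|.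 -/
/-!
Subtracting the defining equations gives the resolvent identity
`Aᵢ (sᵢ - s_ref) = -(gᵢ - ḡ) - (Aᵢ - A) s_ref`. Since `Aᵢ ⪰ μ I` forces `μ ‖x‖ ≤ ‖Aᵢ x‖`, this yields
`‖sᵢ - s_ref‖ ≤ (‖gᵢ - ḡ‖ + ‖Aᵢ - A‖₂ ‖s_ref‖) / μ`, where `‖s_ref‖ ≤ ‖ḡ‖ / λ̄` by the same
argument for `A ⪰ λ̄ I` and `‖Aᵢ - A‖₂ ≤ ‖Hᵢ - H̄‖₂ + |λ̃ᵢ - λ̄|`. Averaging over `i` with the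
triangle inequality gives the bound.
-/

open scoped BigOperators

/-- Spectral norm of a real matrix, as the operator norm on Euclidean space. -/
noncomputable def specNorm {d : ℕ} (A : Matrix (Fin d) (Fin d) ℝ) : ℝ :=
  ‖Matrix.toEuclideanCLM (𝕜 := ℝ) A‖

open scoped RealInnerProductSpace

namespace ContinuousLinearMap

variable {E : Type*} [NormedAddCommGroup E] [InnerProductSpace ℝ E]

theorem IsPositive.mul_norm_le_norm_apply {T : E →L[ℝ] E} {c : ℝ} (hT : (T - c • 1).IsPositive)
    (x : E) : c * ‖x‖ ≤ ‖T x‖ := by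
  have hquad : c * ‖x‖ ^ 2 ≤ ⟪T x, x⟫ := by
    have := hT.inner_nonneg_left x
    simp only [sub_apply, smul_apply, one_apply_eq_self, inner_sub_left, inner_smul_left,
      real_inner_self_eq_norm_sq, RCLike.conj_to_real] at this
    linarith
  have hcs : ⟪T x, x⟫ ≤ ‖T x‖ * ‖x‖ := real_inner_le_norm _ _
  rcases (norm_nonneg x).eq_or_lt with hx | hx
  · rw [← hx, mul_zero]; exact norm_nonneg _
  · nlinarith

end ContinuousLinearMap

theorem Matrix.PosSemidef.isPositive_toEuclideanCLM_sub_smul_one {n : Type*} [Fintype n]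
    [DecidableEq n] {M : Matrix n n ℝ} {c : ℝ} (hM : (M - c • 1).PosSemidef) :
    (Matrix.toEuclideanCLM (𝕜 := ℝ) M - c • 1).IsPositive := by
  rw [← map_one (Matrix.toEuclideanCLM (n := n) (𝕜 := ℝ)), ← map_smul, ← map_sub]
  exact Matrix.isPositive_toEuclideanLin_iff.mpr hM

theorem norm_sub_le_of_apply_eq_neg {E : Type*} [NormedAddCommGroup E] [NormedSpace ℝ E]
    {T S : E →L[ℝ] E} {μ : ℝ} (hμ : 0 < μ) (hT : ∀ x, μ * ‖x‖ ≤ ‖T x‖) {s s' g g' : E}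
    (hs : T s = -g) (hs' : S s' = -g') :
    ‖s - s'‖ ≤ (‖g - g'‖ + ‖T - S‖ * ‖s'‖) / μ := by
  have hres : T (s - s') = -(g - g') - (T - S) s' := by
    rw [map_sub, sub_apply, hs, hs']; abel
  rw [le_div_iff₀' hμ]
  calc μ * ‖s - s'‖ ≤ ‖T (s - s')‖ := hT _
    _ ≤ ‖g - g'‖ + ‖(T - S) s'‖ := by rw [hres]; exact (norm_sub_le _ _).trans_eq (by rw [norm_neg])
    _ ≤ ‖g - g'‖ + ‖T - S‖ * ‖s'‖ := by gcongr; exact (T - S).le_opNorm s'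

theorem norm_toEuclideanCLM_add_smul_one_le {n : Type*} [Fintype n] [DecidableEq n]
    (M : Matrix n n ℝ) (c : ℝ) :
    ‖Matrix.toEuclideanCLM (n := n) (𝕜 := ℝ) (M + c • 1)‖ ≤
      ‖Matrix.toEuclideanCLM (n := n) (𝕜 := ℝ) M‖ + |c| := by
  rw [map_add, map_smul, map_one]
  refine (norm_add_le _ _).trans (add_le_add_right ?_ _)
  exact (ContinuousLinearMap.opNorm_le_bound _ (abs_nonneg c) fun x => by
    rw [smul_apply, one_apply_eq_self, norm_smul, Real.norm_eq_abs])

theorem norm_average_sub_le {ι E : Type*} [Fintype ι] [Nonempty ι] [SeminormedAddCommGroup E]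
    [NormedSpace ℝ E] (s : ι → E) (s' : E) :
    ‖(Fintype.card ι : ℝ)⁻¹ • ∑ i, s i - s'‖ ≤ (Fintype.card ι : ℝ)⁻¹ * ∑ i, ‖s i - s'‖ := by
  have hcard : (0 : ℝ) < Fintype.card ι := by exact_mod_cast Fintype.card_pos
  have : (Fintype.card ι : ℝ)⁻¹ • ∑ i, s i - s' = (Fintype.card ι : ℝ)⁻¹ • ∑ i, (s i - s') := by
    rw [Finset.sum_sub_distrib, smul_sub, Finset.sum_const, Finset.card_univ,
      ← Nat.cast_smul_eq_nsmul ℝ, smul_smul, inv_mul_cancel₀ hcard.ne', one_smul]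
  rw [this, norm_smul, Real.norm_of_nonneg (inv_nonneg.2 hcard.le)]
  gcongr
  exact norm_sum_le _ _

theorem stmt11_general {N d : ℕ} (hN : 0 < N)
    (H : Fin N → Matrix (Fin d) (Fin d) ℝ)
    (lam : Fin N → ℝ) (hlam : ∀ i, 0 < lam i)
    (A : Fin N → Matrix (Fin d) (Fin d) ℝ)
    (hA : ∀ i, A i = H i + lam i • (1 : Matrix (Fin d) (Fin d) ℝ))
    (Hbar : Matrix (Fin d) (Fin d) ℝ)
    (lambar : ℝ) (hlambar : lambar = (N : ℝ)⁻¹ * ∑ i, lam i)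
    (Abar : Matrix (Fin d) (Fin d) ℝ)
    (hAbar : Abar = Hbar + lambar • (1 : Matrix (Fin d) (Fin d) ℝ))
    (μ : ℝ) (hμ : μ = ⨅ i, lam i)
    (hAiPSD : ∀ i, (A i - μ • (1 : Matrix (Fin d) (Fin d) ℝ)).PosSemidef)
    (hAbarPSD : (Abar - lambar • (1 : Matrix (Fin d) (Fin d) ℝ)).PosSemidef)
    (g : Fin N → EuclideanSpace ℝ (Fin d))
    (gbar : EuclideanSpace ℝ (Fin d))
    (s : Fin N → EuclideanSpace ℝ (Fin d))
    (hs : ∀ i, Matrix.toEuclideanCLM (𝕜 := ℝ) (A i) (s i) = -(g i))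
    (sref : EuclideanSpace ℝ (Fin d))
    (hsref : Matrix.toEuclideanCLM (𝕜 := ℝ) Abar sref = -gbar) :
    ‖(N : ℝ)⁻¹ • ∑ i, s i - sref‖ ≤
      (1 / μ) * ((N : ℝ)⁻¹ * ∑ i, ‖g i - gbar‖)
        + (‖gbar‖ / (μ * lambar)) *
            ((N : ℝ)⁻¹ * ∑ i, specNorm (H i - Hbar)
              + (N : ℝ)⁻¹ * ∑ i, |lam i - lambar|) := by
  have : Nonempty (Fin N) := ⟨⟨0, hN⟩⟩
  have hμ_pos : 0 < μ := by
    obtain ⟨j, hj⟩ := exists_eq_ciInf_of_finite (f := lam)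
    exact hμ ▸ hj ▸ hlam j
  have hlambar_pos : 0 < lambar :=
    hlambar ▸ mul_pos (by positivity) (Finset.sum_pos (fun i _ => hlam i) Finset.univ_nonempty)
  have hsref_le : ‖sref‖ ≤ ‖gbar‖ / lambar := by
    rw [le_div_iff₀' hlambar_pos, ← norm_neg gbar, ← hsref]
    exact hAbarPSD.isPositive_toEuclideanCLM_sub_smul_one.mul_norm_le_norm_apply sref
  have hstep (i : Fin N) : ‖s i - sref‖ ≤ (1 / μ) * ‖g i - gbar‖
      + ‖gbar‖ / (μ * lambar) * (specNorm (H i - Hbar) + |lam i - lambar|) := by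
    have hAdiff : A i - Abar = (H i - Hbar) + (lam i - lambar) • 1 := by
      rw [hA, hAbar, sub_smul]; abel
    have hdiff := norm_toEuclideanCLM_add_smul_one_le (H i - Hbar) (lam i - lambar)
    rw [← hAdiff, map_sub] at hdiff
    calc ‖s i - sref‖
        ≤ (‖g i - gbar‖ + ‖Matrix.toEuclideanCLM (𝕜 := ℝ) (A i)
            - Matrix.toEuclideanCLM (𝕜 := ℝ) Abar‖ * ‖sref‖) / μ :=
          norm_sub_le_of_apply_eq_neg hμ_pos
            (hAiPSD i).isPositive_toEuclideanCLM_sub_smul_one.mul_norm_le_norm_apply (hs i) hsref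
      _ ≤ (‖g i - gbar‖ + (specNorm (H i - Hbar) + |lam i - lambar|) * (‖gbar‖ / lambar)) / μ := by
          unfold specNorm; gcongr
      _ = _ := by field_simp
  calc ‖(N : ℝ)⁻¹ • ∑ i, s i - sref‖ ≤ (N : ℝ)⁻¹ * ∑ i, ‖s i - sref‖ := by
        simpa using norm_average_sub_le s sref
    _ ≤ (N : ℝ)⁻¹ * ∑ i, ((1 / μ) * ‖g i - gbar‖
          + ‖gbar‖ / (μ * lambar) * (specNorm (H i - Hbar) + |lam i - lambar|)) := by
        gcongr with i; exact hstep i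
    _ = _ := by simp only [Finset.sum_add_distrib, ← Finset.mul_sum, mul_add]; ring

/-- step dispersion via a resolvent identity.
With `Aᵢ = Hᵢ + λ̃ᵢI`, `A = H̄ + λ̄I`, `μ = minᵢ λ̃ᵢ`, `Aᵢ ⪰ μI`, `A ⪰ λ̄I`,
`sᵢ = −Aᵢ⁻¹gᵢ` and `s_ref = −A⁻¹ḡ`:
`‖(1/N)∑ᵢ sᵢ − s_ref‖ ≤ (1/μ)·Δᵍ + (‖ḡ‖/(μλ̄))·(Δᴴ + Δᴸ)`. -/
theorem stmt11 {N d : ℕ} (hN : 0 < N)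
    (H : Fin N → Matrix (Fin d) (Fin d) ℝ) (hH : ∀ i, (H i).IsHermitian)
    (lam : Fin N → ℝ) (hlam : ∀ i, 0 < lam i)
    (A : Fin N → Matrix (Fin d) (Fin d) ℝ)
    (hA : ∀ i, A i = H i + lam i • (1 : Matrix (Fin d) (Fin d) ℝ))
    (Hbar : Matrix (Fin d) (Fin d) ℝ) (hHbar : Hbar = (N : ℝ)⁻¹ • ∑ i, H i)
    (lambar : ℝ) (hlambar : lambar = (N : ℝ)⁻¹ * ∑ i, lam i)
    (Abar : Matrix (Fin d) (Fin d) ℝ)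
    (hAbar : Abar = Hbar + lambar • (1 : Matrix (Fin d) (Fin d) ℝ))
    (μ : ℝ) (hμ : μ = ⨅ i, lam i)
    (hAiPSD : ∀ i, (A i - μ • (1 : Matrix (Fin d) (Fin d) ℝ)).PosSemidef)
    (hAbarPSD : (Abar - lambar • (1 : Matrix (Fin d) (Fin d) ℝ)).PosSemidef)
    (g : Fin N → EuclideanSpace ℝ (Fin d))
    (gbar : EuclideanSpace ℝ (Fin d)) (hgbar : gbar = (N : ℝ)⁻¹ • ∑ i, g i)
    (s : Fin N → EuclideanSpace ℝ (Fin d))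
    (hs : ∀ i, Matrix.toEuclideanCLM (𝕜 := ℝ) (A i) (s i) = -(g i))
    (sref : EuclideanSpace ℝ (Fin d))
    (hsref : Matrix.toEuclideanCLM (𝕜 := ℝ) Abar sref = -gbar) :
    ‖(N : ℝ)⁻¹ • ∑ i, s i - sref‖ ≤
      (1 / μ) * ((N : ℝ)⁻¹ * ∑ i, ‖g i - gbar‖)
        + (‖gbar‖ / (μ * lambar)) *
            ((N : ℝ)⁻¹ * ∑ i, specNorm (H i - Hbar)
              + (N : ℝ)⁻¹ * ∑ i, |lam i - lambar|) :=
  stmt11_general hN H lam hlam A hA Hbar lambar hlambar Abar hAbar μ hμ hAiPSD hAbarPSD g gbar s hs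
    sref hsref
end

section
/- Let M > 0 and α ∈ (0,1). Let g₁,…,g_N ∈ ℝ^d with average ḡ := (1/N)∑ᵢ gᵢ ≠ 0, and let δ₁,…,δ_N ≥ 0. Set λᵢ := √(M‖gᵢ‖), λ̃ᵢ := λᵢ + δᵢ, λ̄ := (1/N)∑ᵢ λ̃ᵢ, δ̄ := (1/N)∑ᵢ δᵢ, and Δᵍ := (1/N)∑ᵢ‖gᵢ − ḡ‖. If maxᵢ‖gᵢ − ḡ‖ ≤ α‖ḡ‖, then (1/N)∑ᵢ|λ̃ᵢ − λ̄| ≤ (√M/√(1−α))·Δᵍ/√‖ḡ‖ + 2δ̄. -/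
/-!
Compare every `λ̃ᵢ` with the reference value `√(M‖ḡ‖)` instead of with the mean `λ̄`: the mean
absolute deviation from the mean is at most twice the mean absolute deviation from any point.
Since `‖gᵢ‖` and `‖ḡ‖` are both at least `(1 - α)‖ḡ‖`, the square root is Lipschitz on the relevant
range with constant `1 / (2√((1 - α)‖ḡ‖))`, so `|λᵢ - √(M‖ḡ‖)| ≤ √M ‖gᵢ - ḡ‖ / (2√((1 - α)‖ḡ‖))`,
while the shifts contribute at most `δᵢ`.
-/

open Finset

theorem Finset.sum_abs_sub_mean_le_two_mul_sum_abs_sub {ι : Type*} (s : Finset ι) (f : ι → ℝ)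
    (c : ℝ) :
    ∑ i ∈ s, |f i - (#s : ℝ)⁻¹ * ∑ j ∈ s, f j| ≤ 2 * ∑ i ∈ s, |f i - c| := by
  set m := (#s : ℝ)⁻¹ * ∑ j ∈ s, f j
  have hcard_mul_mean : (#s : ℝ) * m = ∑ j ∈ s, f j := by
    rcases s.eq_empty_or_nonempty with rfl | hs
    · simp
    · have : (#s : ℝ) ≠ 0 := by exact_mod_cast hs.card_pos.ne'
      rw [mul_inv_cancel_left₀ this]
  have hmean : (#s : ℝ) * |m - c| ≤ ∑ i ∈ s, |f i - c| :=
    calc (#s : ℝ) * |m - c| = |∑ i ∈ s, (f i - c)| := by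
          rw [sum_sub_distrib, sum_const, nsmul_eq_mul, ← hcard_mul_mean, ← mul_sub, abs_mul,
            Nat.abs_cast]
      _ ≤ ∑ i ∈ s, |f i - c| := abs_sum_le_sum_abs _ _
  calc ∑ i ∈ s, |f i - m| ≤ ∑ i ∈ s, (|f i - c| + |m - c|) :=
        sum_le_sum fun i _ => (abs_sub_le _ c _).trans_eq (by rw [abs_sub_comm c])
    _ = ∑ i ∈ s, |f i - c| + #s * |m - c| := by rw [sum_add_distrib, sum_const, nsmul_eq_mul]
    _ ≤ 2 * ∑ i ∈ s, |f i - c| := by linarith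

theorem Real.abs_sqrt_sub_sqrt_le {a b c : ℝ} (hc : 0 < c) (ha : c ≤ a) (hb : c ≤ b) :
    |√a - √b| ≤ |a - b| / (2 * √c) := by
  have hsum : 2 * √c ≤ √a + √b := by
    linarith [Real.sqrt_le_sqrt ha, Real.sqrt_le_sqrt hb]
  have hprod : |√a - √b| * (√a + √b) = |a - b| := by
    rw [← abs_of_nonneg (by positivity : 0 ≤ √a + √b), ← abs_mul,
      show (√a - √b) * (√a + √b) = √a ^ 2 - √b ^ 2 by ring, sq_sqrt (hc.le.trans ha),
      sq_sqrt (hc.le.trans hb)]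
  rw [le_div_iff₀ (by positivity), ← hprod]
  exact mul_le_mul_of_nonneg_left hsum (abs_nonneg _)

theorem abs_sqrt_norm_sub_sqrt_norm_le {E : Type*} [SeminormedAddCommGroup E] {x y : E} {α : ℝ}
    (hα : α < 1) (hy : 0 < ‖y‖) (hxy : ‖x - y‖ ≤ α * ‖y‖) :
    |√‖x‖ - √‖y‖| ≤ ‖x - y‖ / (2 * (√(1 - α) * √‖y‖)) := by
  have hx : (1 - α) * ‖y‖ ≤ ‖x‖ := by linarith [norm_sub_norm_le y x, norm_sub_rev x y]
  have hy' : (1 - α) * ‖y‖ ≤ ‖y‖ := by nlinarith [hxy, norm_nonneg (x - y)]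
  calc |√‖x‖ - √‖y‖| ≤ |‖x‖ - ‖y‖| / (2 * √((1 - α) * ‖y‖)) :=
        Real.abs_sqrt_sub_sqrt_le (by nlinarith) hx hy'
    _ ≤ ‖x - y‖ / (2 * (√(1 - α) * √‖y‖)) := by
        rw [Real.sqrt_mul (by linarith)]
        gcongr
        exact abs_norm_sub_norm_le x y

theorem stmt12_general {N d : ℕ}
    (M α : ℝ) (hα1 : α < 1)
    (g : Fin N → EuclideanSpace ℝ (Fin d))
    (gbar : EuclideanSpace ℝ (Fin d))
    (hg0 : gbar ≠ 0)
    (δ : Fin N → ℝ) (hδ : ∀ i, 0 ≤ δ i)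
    (lam lamt : Fin N → ℝ)
    (hlam : ∀ i, lam i = Real.sqrt (M * ‖g i‖))
    (hlamt : ∀ i, lamt i = lam i + δ i)
    (lambar δbar Δg : ℝ)
    (hlambar : lambar = (N : ℝ)⁻¹ * ∑ i, lamt i)
    (hδbar : δbar = (N : ℝ)⁻¹ * ∑ i, δ i)
    (hΔg : Δg = (N : ℝ)⁻¹ * ∑ i, ‖g i - gbar‖)
    (hmax : ∀ i, ‖g i - gbar‖ ≤ α * ‖gbar‖) :
    (N : ℝ)⁻¹ * ∑ i, |lamt i - lambar| ≤
      (Real.sqrt M / Real.sqrt (1 - α)) * (Δg / Real.sqrt ‖gbar‖) + 2 * δbar := by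
  have hgbar_pos : 0 < ‖gbar‖ := norm_pos_iff.mpr hg0
  have hdev : ∀ i, |lamt i - √(M * ‖gbar‖)| ≤
      √M * (‖g i - gbar‖ / (2 * (√(1 - α) * √‖gbar‖))) + δ i := fun i =>
    calc |lamt i - √(M * ‖gbar‖)| = |√M * (√‖g i‖ - √‖gbar‖) + δ i| := by
          rw [hlamt, hlam, Real.sqrt_mul' _ (norm_nonneg _), Real.sqrt_mul' _ (norm_nonneg _)]
          ring_nf
      _ ≤ √M * |√‖g i‖ - √‖gbar‖| + δ i := by
          grw [abs_add_le, abs_mul, abs_of_nonneg (Real.sqrt_nonneg M), abs_of_nonneg (hδ i)]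
      _ ≤ _ := by
          grw [abs_sqrt_norm_sub_sqrt_norm_le hα1 hgbar_pos (hmax i)]
  calc (N : ℝ)⁻¹ * ∑ i, |lamt i - lambar|
      ≤ (N : ℝ)⁻¹ * (2 * ∑ i, |lamt i - √(M * ‖gbar‖)|) := by
        have hmean := sum_abs_sub_mean_le_two_mul_sum_abs_sub univ lamt √(M * ‖gbar‖)
        rw [card_univ, Fintype.card_fin, ← hlambar] at hmean
        gcongr
    _ ≤ (N : ℝ)⁻¹ * (2 * ∑ i, (√M * (‖g i - gbar‖ / (2 * (√(1 - α) * √‖gbar‖))) + δ i)) := by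
        gcongr with i
        exact hdev i
    _ = _ := by
        rw [hΔg, hδbar, sum_add_distrib, ← mul_sum, ← sum_div]
        field_simp

/-- regularizer dispersion bound.
With `λᵢ = √(M‖gᵢ‖)`, `λ̃ᵢ = λᵢ + δᵢ`, if `maxᵢ‖gᵢ − ḡ‖ ≤ α‖ḡ‖`, then
`(1/N)∑ᵢ|λ̃ᵢ − λ̄| ≤ (√M/√(1−α))·Δᵍ/√‖ḡ‖ + 2δ̄`. -/
theorem stmt12 {N d : ℕ} (hN : 0 < N)
    (M α : ℝ) (hM : 0 < M) (hα0 : 0 < α) (hα1 : α < 1)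
    (g : Fin N → EuclideanSpace ℝ (Fin d))
    (gbar : EuclideanSpace ℝ (Fin d)) (hgbar : gbar = (N : ℝ)⁻¹ • ∑ i, g i)
    (hg0 : gbar ≠ 0)
    (δ : Fin N → ℝ) (hδ : ∀ i, 0 ≤ δ i)
    (lam lamt : Fin N → ℝ)
    (hlam : ∀ i, lam i = Real.sqrt (M * ‖g i‖))
    (hlamt : ∀ i, lamt i = lam i + δ i)
    (lambar δbar Δg : ℝ)
    (hlambar : lambar = (N : ℝ)⁻¹ * ∑ i, lamt i)
    (hδbar : δbar = (N : ℝ)⁻¹ * ∑ i, δ i)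
    (hΔg : Δg = (N : ℝ)⁻¹ * ∑ i, ‖g i - gbar‖)
    (hmax : ∀ i, ‖g i - gbar‖ ≤ α * ‖gbar‖) :
    (N : ℝ)⁻¹ * ∑ i, |lamt i - lambar| ≤
      (Real.sqrt M / Real.sqrt (1 - α)) * (Δg / Real.sqrt ‖gbar‖) + 2 * δbar :=
  stmt12_general M α hα1 g gbar hg0 δ hδ lam lamt hlam hlamt lambar δbar Δg hlambar hδbar hΔg hmax
end

section
/- Let f : ℝ^d → ℝ be twice continuously differentiable, x̄ ∈ ℝ^d, and M_H ≥ ‖∇²f(x̄)‖₂. Let λ > 0, η ∈ (0,1), H̄ a d×d real symmetric matrix, ḡ ∈ ℝ^d, s̄ ∈ ℝ^d, and s_ref ∈ ℝ^d with (H̄ + λI)s_ref = −ḡ. Suppose (1) ‖s̄ − s_ref‖ ≤ (η/8)·(λ/(M_H + λ))·‖s̄‖, (2) ‖∇f(x̄) − ḡ‖ ≤ (η/8)·λ·‖s̄‖, and (3) ‖∇²f(x̄) − H̄‖₂ ≤ (η/8)·λ. Then ‖(∇²f(x̄) + λI)s̄ + ∇f(x̄)‖ ≤ η·λ·‖s̄‖.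 -/
/-! Since `(H̄ + λI) s_ref = -ḡ`, the residual splits as
`(∇²f(x̄) - H̄) s̄ + (H̄ + λI)(s̄ - s_ref) + (∇f(x̄) - ḡ)`. The outer terms are each at most
`ηλ‖s̄‖/8`. As `‖H̄‖₂ ≤ M_H + ηλ/8`, the factor `λ / (M_H + λ)` in the step accuracy cancels the
norm of `H̄ + λI` up to a lower-order term, so the middle term is at most `2 · ηλ‖s̄‖/8`. -/

section RegularizedResidual

variable {E : Type*} [NormedAddCommGroup E] [NormedSpace ℝ E]

theorem apply_add_smul_add_eq_of_apply_add_smul_eq_neg (H A : E →L[ℝ] E) (lam : ℝ)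
    (g gbar s sref : E) (hsref : A sref + lam • sref = -gbar) :
    H s + lam • s + g = (H - A) s + (A (s - sref) + lam • (s - sref)) + (g - gbar) := by
  rw [sub_apply, map_sub, eq_sub_of_add_eq hsref]
  module

theorem norm_apply_add_smul_le (A : E →L[ℝ] E) (lam : ℝ) (v : E) :
    ‖A v + lam • v‖ ≤ (‖A‖ + |lam|) * ‖v‖ :=
  calc ‖A v + lam • v‖ ≤ ‖A‖ * ‖v‖ + |lam| * ‖v‖ := by
        grw [norm_add_le, A.le_opNorm, norm_smul, Real.norm_eq_abs]
    _ = (‖A‖ + |lam|) * ‖v‖ := by ring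

theorem norm_apply_add_smul_add_le_of_apply_add_smul_eq_neg (H A : E →L[ℝ] E) (lam : ℝ)
    (g gbar s sref : E) (hsref : A sref + lam • sref = -gbar) :
    ‖H s + lam • s + g‖ ≤ ‖H - A‖ * ‖s‖ + (‖A‖ + |lam|) * ‖s - sref‖ + ‖g - gbar‖ := by
  rw [apply_add_smul_add_eq_of_apply_add_smul_eq_neg H A lam g gbar s sref hsref]
  grw [norm_add₃_le, (H - A).le_opNorm, norm_apply_add_smul_le]

end RegularizedResidual

theorem add_mul_mul_div_add_le {M lam a s : ℝ} (hM : 0 ≤ M) (hlam : 0 < lam) (ha0 : 0 ≤ a)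
    (ha1 : a ≤ 1) (hs : 0 ≤ s) :
    (M + a * lam + lam) * (a * (lam / (M + lam)) * s) ≤ 2 * (a * lam * s) := by
  set c := lam / (M + lam)
  have hMlam : 0 < M + lam := by linarith
  have hc0 : 0 ≤ c := by positivity
  have hc1 : c ≤ 1 := (div_le_one hMlam).2 (by linarith)
  have hcancel : (M + lam) * c = lam := mul_div_cancel₀ lam hMlam.ne'
  have hlower : a * lam * (a * c * s) ≤ a * lam * s :=
    mul_le_mul_of_nonneg_left (mul_le_of_le_one_left hs (mul_le_one₀ ha1 hc0 hc1)) (by positivity)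
  calc (M + a * lam + lam) * (a * c * s) = a * lam * s + a * lam * (a * c * s) := by
        linear_combination a * s * hcancel
    _ ≤ 2 * (a * lam * s) := by linarith

theorem stmt13_general {d : ℕ} (f : EuclideanSpace ℝ (Fin d) → ℝ)
    (xbar : EuclideanSpace ℝ (Fin d))
    (MH : ℝ) (hMH : ‖fderiv ℝ (gradient f) xbar‖ ≤ MH)
    (lam η : ℝ) (hlam : 0 < lam) (hη0 : 0 < η) (hη1 : η < 1)
    (Hbar : Matrix (Fin d) (Fin d) ℝ)
    (gbar sbar sref : EuclideanSpace ℝ (Fin d))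
    (hsref : Matrix.toEuclideanCLM (𝕜 := ℝ) Hbar sref + lam • sref = -gbar)
    (h1 : ‖sbar - sref‖ ≤ (η / 8) * (lam / (MH + lam)) * ‖sbar‖)
    (h2 : ‖gradient f xbar - gbar‖ ≤ (η / 8) * lam * ‖sbar‖)
    (h3 : ‖fderiv ℝ (gradient f) xbar - Matrix.toEuclideanCLM (𝕜 := ℝ) Hbar‖
      ≤ (η / 8) * lam) :
    ‖fderiv ℝ (gradient f) xbar sbar + lam • sbar + gradient f xbar‖
      ≤ η * lam * ‖sbar‖ := by
  set H := fderiv ℝ (gradient f) xbar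
  set A := Matrix.toEuclideanCLM (𝕜 := ℝ) Hbar
  have hMH0 : 0 ≤ MH := (norm_nonneg H).trans hMH
  have hA : ‖A‖ ≤ MH + η / 8 * lam := by
    grw [norm_le_insert' A H, norm_sub_rev, hMH, h3]
  have hstep := add_mul_mul_div_add_le hMH0 hlam (by positivity : 0 ≤ η / 8) (by linarith)
    (norm_nonneg sbar)
  have hbudget : 0 ≤ η / 8 * lam * ‖sbar‖ := by positivity
  calc _ ≤ ‖H - A‖ * ‖sbar‖ + (‖A‖ + |lam|) * ‖sbar - sref‖ + ‖gradient f xbar - gbar‖ :=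
        norm_apply_add_smul_add_le_of_apply_add_smul_eq_neg H A lam _ gbar sbar sref hsref
    _ ≤ η / 8 * lam * ‖sbar‖
        + (MH + η / 8 * lam + lam) * (η / 8 * (lam / (MH + lam)) * ‖sbar‖)
        + η / 8 * lam * ‖sbar‖ := by
      rw [abs_of_pos hlam]
      grw [h3, hA, h1, h2]
    _ ≤ η * lam * ‖sbar‖ := by linarith

/-- inexact regularized Newton condition.
If `(H̄ + λI)s_ref = −ḡ` and the dispersion-control, gradient-bridge, and
Hessian-bridge accuracy conditions hold, then
`‖(∇²f(x̄) + λI)s̄ + ∇f(x̄)‖ ≤ η·λ·‖s̄‖`. -/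
theorem stmt13 {d : ℕ} (f : EuclideanSpace ℝ (Fin d) → ℝ)
    (hf : ContDiff ℝ 2 f)
    (xbar : EuclideanSpace ℝ (Fin d))
    (MH : ℝ) (hMH : ‖fderiv ℝ (gradient f) xbar‖ ≤ MH)
    (lam η : ℝ) (hlam : 0 < lam) (hη0 : 0 < η) (hη1 : η < 1)
    (Hbar : Matrix (Fin d) (Fin d) ℝ) (hHbar : Hbar.IsHermitian)
    (gbar sbar sref : EuclideanSpace ℝ (Fin d))
    (hsref : Matrix.toEuclideanCLM (𝕜 := ℝ) Hbar sref + lam • sref = -gbar)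
    (h1 : ‖sbar - sref‖ ≤ (η / 8) * (lam / (MH + lam)) * ‖sbar‖)
    (h2 : ‖gradient f xbar - gbar‖ ≤ (η / 8) * lam * ‖sbar‖)
    (h3 : ‖fderiv ℝ (gradient f) xbar - Matrix.toEuclideanCLM (𝕜 := ℝ) Hbar‖
      ≤ (η / 8) * lam) :
    ‖fderiv ℝ (gradient f) xbar sbar + lam • sbar + gradient f xbar‖
      ≤ η * lam * ‖sbar‖ :=
  stmt13_general f xbar MH hMH lam η hlam hη0 hη1 Hbar gbar sbar sref hsref h1 h2 h3
end

section
/- Let f : ℝ^d → ℝ be convex and twice continuously differentiable with L₂-Lipschitz Hessian. Let x, s ∈ ℝ^d, λ > 0, and η ∈ (0, 5/6). If ‖(∇²f(x) + λI)s + ∇f(x)‖ ≤ η·λ·‖s‖ and L₂‖s‖ ≤ λ, then f(x + s) ≤ f(x) − (1 − η − 1/6)·λ·‖s‖². -/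
/-!
Restrict `f` to the segment `t ↦ x + t • s`. Since the second derivative of the restriction,
`⟪∇²f(x + t s) s, s⟫`, grows at most like `L₂ t ‖s‖³`, comparing derivatives twice gives the cubic
upper bound `f(x + s) ≤ f x + ⟪∇f x, s⟫ + ⟪∇²f x s, s⟫ / 2 + L₂ ‖s‖³ / 6`. Pairing the residual with
`s` bounds `⟪∇f x, s⟫` by `(η - 1) λ ‖s‖² - ⟪∇²f x s, s⟫`; the Hessian term is nonnegative by
convexity and `L₂ ‖s‖³ ≤ λ ‖s‖²` by the step-size condition.
-/

open Set InnerProductSpace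

open scoped RealInnerProductSpace

theorem image_one_le_of_deriv2_sub_le {g g' g'' : ℝ → ℝ} {C : ℝ}
    (hg : ∀ t ∈ Icc (0 : ℝ) 1, HasDerivAt g (g' t) t)
    (hg' : ∀ t ∈ Icc (0 : ℝ) 1, HasDerivAt g' (g'' t) t)
    (hC : ∀ t ∈ Icc (0 : ℝ) 1, g'' t - g'' 0 ≤ C * t) :
    g 1 ≤ g 0 + g' 0 + g'' 0 / 2 + C / 6 := by
  have hpoly : ∀ a b c t : ℝ,
      HasDerivAt (fun u ↦ a * u + b * u ^ 2 / 2 + c * u ^ 3 / 6) (a + b * t + c * t ^ 2 / 2) t := by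
    intro a b c t
    refine ((((hasDerivAt_id' t).const_mul a).add
      (((hasDerivAt_pow 2 t).const_mul b).div_const 2)).add
      (((hasDerivAt_pow 3 t).const_mul c).div_const 6)).congr_deriv ?_
    push_cast
    ring
  have hg'_le : ∀ t ∈ Icc (0 : ℝ) 1, g' t ≤ g' 0 + (g'' 0 * t + C * t ^ 2 / 2 + 0 * t ^ 3 / 6) := by
    refine image_le_of_deriv_right_le_deriv_boundary
      (fun t ht ↦ (hg' t ht).continuousAt.continuousWithinAt)
      (fun t ht ↦ (hg' t (Ico_subset_Icc_self ht)).hasDerivWithinAt) (by simp)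
      (fun t _ ↦ ((hpoly _ _ _ t).const_add _).continuousAt.continuousWithinAt)
      (fun t _ ↦ ((hpoly _ _ _ t).const_add _).hasDerivWithinAt) (fun t ht ↦ ?_)
    linarith [hC t (Ico_subset_Icc_self ht)]
  have hg_le := image_le_of_deriv_right_le_deriv_boundary
    (fun t ht ↦ (hg t ht).continuousAt.continuousWithinAt)
    (fun t ht ↦ (hg t (Ico_subset_Icc_self ht)).hasDerivWithinAt) (by simp)
    (fun t _ ↦ ((hpoly (g' 0) (g'' 0) C t).const_add (g 0)).continuousAt.continuousWithinAt)
    (fun t _ ↦ ((hpoly _ _ _ t).const_add _).hasDerivWithinAt)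
    (fun t ht ↦ by linarith [hg'_le t (Ico_subset_Icc_self ht)]) (right_mem_Icc.2 zero_le_one)
  simpa only [one_pow, mul_one, add_assoc] using hg_le

theorem HasFDerivAt.hasDerivAt_comp_add_smul {E F : Type*} [NormedAddCommGroup E]
    [NormedSpace ℝ E] [NormedAddCommGroup F] [NormedSpace ℝ F] {φ : E → F} {φ' : E →L[ℝ] F}
    {x s : E} {t : ℝ} (h : HasFDerivAt φ φ' (x + t • s)) :
    HasDerivAt (fun u : ℝ ↦ φ (x + u • s)) (φ' s) t := by
  have := h.comp_hasDerivAt t (((hasDerivAt_id t).smul_const s).const_add x)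
  simpa [Function.comp_def] using this

section InnerProductSpace

variable {E : Type*} [NormedAddCommGroup E] [InnerProductSpace ℝ E] [CompleteSpace E]
  {f : E → ℝ} {x : E}

theorem ContDiff.gradient {n : WithTop ℕ∞} (hf : ContDiff ℝ (n + 1) f) :
    ContDiff ℝ n (gradient f) :=
  (toDual ℝ E).symm.toContinuousLinearEquiv.contDiff.comp (hf.fderiv_right le_rfl)

theorem HasGradientAt.hasDerivAt_comp_add_smul {g s : E} {t : ℝ}
    (h : HasGradientAt f g (x + t • s)) : HasDerivAt (fun u : ℝ ↦ f (x + u • s)) ⟪g, s⟫ t :=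
  h.hasFDerivAt.hasDerivAt_comp_add_smul

theorem HasFDerivAt.hasDerivAt_inner_gradient_comp_add_smul {H : E →L[ℝ] E} {s : E} {t : ℝ}
    (h : HasFDerivAt (gradient f) H (x + t • s)) :
    HasDerivAt (fun u : ℝ ↦ ⟪gradient f (x + u • s), s⟫) ⟪H s, s⟫ t := by
  simpa using h.hasDerivAt_comp_add_smul.inner ℝ (hasDerivAt_const t s)

theorem ConvexOn.inner_apply_self_nonneg_of_hasFDerivAt_gradient
    (hconv : ConvexOn ℝ univ f) (hf : Differentiable ℝ f) {H : E →L[ℝ] E}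
    (hH : HasFDerivAt (gradient f) H x) (s : E) : 0 ≤ ⟪H s, s⟫ := by
  have hline : ∀ t : ℝ, HasDerivAt (fun u : ℝ ↦ f (x + u • s)) ⟪gradient f (x + t • s), s⟫ t :=
    fun t ↦ (hf _).hasGradientAt.hasDerivAt_comp_add_smul
  have hconv_line : ConvexOn ℝ univ (fun u : ℝ ↦ f (x + u • s)) := by
    simpa [Function.comp_def, AffineMap.lineMap_apply, add_comm]
      using hconv.comp_affineMap (AffineMap.lineMap x (x + s))
  have hmono : Monotone (fun t : ℝ ↦ ⟪gradient f (x + t • s), s⟫) := by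
    intro a b hab
    simpa [(hline a).deriv, (hline b).deriv] using
      hconv_line.monotoneOn_deriv (fun t _ ↦ (hline t).differentiableAt) trivial trivial hab
  have hH_line := HasFDerivAt.hasDerivAt_inner_gradient_comp_add_smul (t := 0) (s := s)
    (by rwa [zero_smul, add_zero])
  exact hH_line.nonneg_of_monotone hmono

theorem map_add_le_of_lipschitz_fderiv_gradient (hf : Differentiable ℝ f)
    (hgrad : Differentiable ℝ (gradient f)) {L : ℝ}
    (hLip : ∀ y, ‖fderiv ℝ (gradient f) y - fderiv ℝ (gradient f) x‖ ≤ L * ‖y - x‖) (s : E) :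
    f (x + s) ≤ f x + ⟪gradient f x, s⟫ + ⟪fderiv ℝ (gradient f) x s, s⟫ / 2 + L * ‖s‖ ^ 3 / 6 := by
  set D := fderiv ℝ (gradient f)
  have hC : ∀ t ∈ Icc (0 : ℝ) 1, ⟪D (x + t • s) s, s⟫ - ⟪D (x + (0 : ℝ) • s) s, s⟫
      ≤ L * ‖s‖ ^ 3 * t := by
    rintro t ⟨ht, -⟩
    calc ⟪D (x + t • s) s, s⟫ - ⟪D (x + (0 : ℝ) • s) s, s⟫
        = ⟪(D (x + t • s) - D x) s, s⟫ := by simp [inner_sub_left]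
      _ ≤ ‖D (x + t • s) - D x‖ * ‖s‖ * ‖s‖ :=
        (real_inner_le_norm _ _).trans (by gcongr; exact (D (x + t • s) - D x).le_opNorm s)
      _ ≤ L * (t * ‖s‖) * ‖s‖ * ‖s‖ := by
        gcongr
        simpa [norm_smul, abs_of_nonneg ht] using hLip (x + t • s)
      _ = L * ‖s‖ ^ 3 * t := by ring
  simpa [add_div] using image_one_le_of_deriv2_sub_le
    (fun t _ ↦ (hf (x + t • s)).hasGradientAt.hasDerivAt_comp_add_smul)
    (fun t _ ↦ (hgrad (x + t • s)).hasFDerivAt.hasDerivAt_inner_gradient_comp_add_smul) hC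

end InnerProductSpace

theorem stmt14_general {d : ℕ} (f : EuclideanSpace ℝ (Fin d) → ℝ) (L₂ : ℝ)
    (hconv : ConvexOn ℝ Set.univ f)
    (hf : ContDiff ℝ 2 f)
    (hLip : ∀ x y : EuclideanSpace ℝ (Fin d),
      ‖fderiv ℝ (gradient f) x - fderiv ℝ (gradient f) y‖ ≤ L₂ * ‖x - y‖)
    (x s : EuclideanSpace ℝ (Fin d)) (lam η : ℝ)
    (hres : ‖fderiv ℝ (gradient f) x s + lam • s + gradient f x‖ ≤ η * lam * ‖s‖)
    (hstep : L₂ * ‖s‖ ≤ lam) :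
    f (x + s) ≤ f x - (1 - η - 1 / 6) * lam * ‖s‖ ^ 2 := by
  have hfd : Differentiable ℝ f := hf.differentiable (by norm_num)
  have hgrad : Differentiable ℝ (gradient f) :=
    (ContDiff.gradient (n := 1) hf).differentiable one_ne_zero
  have htaylor := map_add_le_of_lipschitz_fderiv_gradient hfd hgrad (fun y ↦ hLip y x) s
  have hhess := hconv.inner_apply_self_nonneg_of_hasFDerivAt_gradient hfd (hgrad x).hasFDerivAt s
  have hres_inner : ⟪fderiv ℝ (gradient f) x s, s⟫ + lam * ‖s‖ ^ 2 + ⟪gradient f x, s⟫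
      ≤ η * lam * ‖s‖ ^ 2 := by
    have := (real_inner_le_norm _ s).trans (mul_le_mul_of_nonneg_right hres (norm_nonneg s))
    rw [inner_add_left, inner_add_left, real_inner_smul_left, real_inner_self_eq_norm_sq] at this
    linarith
  have hcubic : L₂ * ‖s‖ ^ 3 ≤ lam * ‖s‖ ^ 2 := by
    nlinarith [mul_le_mul_of_nonneg_right hstep (sq_nonneg ‖s‖)]
  linarith

/-- one-step descent for the inexact regularized Newton step.
For convex `f` with `L₂`-Lipschitz Hessian, if the inexact Newton residual
condition and `L₂‖s‖ ≤ λ` hold with `η ∈ (0, 5/6)`, then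
`f(x+s) ≤ f(x) − (1 − η − 1/6)·λ·‖s‖²`. -/
theorem stmt14 {d : ℕ} (f : EuclideanSpace ℝ (Fin d) → ℝ) (L₂ : ℝ)
    (hconv : ConvexOn ℝ Set.univ f)
    (hf : ContDiff ℝ 2 f)
    (hLip : ∀ x y : EuclideanSpace ℝ (Fin d),
      ‖fderiv ℝ (gradient f) x - fderiv ℝ (gradient f) y‖ ≤ L₂ * ‖x - y‖)
    (x s : EuclideanSpace ℝ (Fin d)) (lam η : ℝ)
    (hlam : 0 < lam) (hη0 : 0 < η) (hη1 : η < 5 / 6)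
    (hres : ‖fderiv ℝ (gradient f) x s + lam • s + gradient f x‖ ≤ η * lam * ‖s‖)
    (hstep : L₂ * ‖s‖ ≤ lam) :
    f (x + s) ≤ f x - (1 - η - 1 / 6) * lam * ‖s‖ ^ 2 :=
  stmt14_general f L₂ hconv hf hLip x s lam η hres hstep
end

section
/- Let f : ℝ^d → ℝ be twice continuously differentiable with L₂-Lipschitz Hessian. Let x, s ∈ ℝ^d, λ > 0, and η ∈ (0, 5/6). If ‖(∇²f(x) + λI)s + ∇f(x)‖ ≤ η·λ·‖s‖ and L₂‖s‖ ≤ λ, then ‖∇f(x + s)‖ ≤ (1 + η + 1/2)·λ·‖s‖. -/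
/-!
Along the segment `t ↦ x + t • s`, the Taylor remainder `∇f(x + t s) − ∇f(x) − t ∇²f(x) s` has
derivative of norm at most `L₂ t ‖s‖²`, so the remainder at `t = 1` is at most `L₂ ‖s‖² / 2`.
Writing `∇f(x + s)` as this remainder plus the Newton residual minus `λ s`, the triangle inequality
bounds it by `L₂ ‖s‖² / 2 + η λ ‖s‖ + λ ‖s‖`, and `L₂ ‖s‖ ≤ λ` turns the first term into `λ ‖s‖ / 2`.
-/

open Set

theorem differentiable_gradient_of_contDiff {F : Type*} [NormedAddCommGroup F]
    [InnerProductSpace ℝ F] [CompleteSpace F] {f : F → ℝ} (hf : ContDiff ℝ 2 f) :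
    Differentiable ℝ (gradient f) := fun y =>
  (InnerProductSpace.toDual ℝ F).symm.toContinuousLinearEquiv.differentiableAt.comp y
    ((hf.fderiv_right (m := 1) (by norm_num)).differentiable (by norm_num) y)

section Taylor

variable {E F : Type*} [NormedAddCommGroup E] [NormedSpace ℝ E]
  [NormedAddCommGroup F] [NormedSpace ℝ F] {g : E → F}

theorem hasDerivAt_taylorRemainder_segment (hg : Differentiable ℝ g) (x s : E) (t : ℝ) :
    HasDerivAt (fun t : ℝ => g (x + t • s) - g x - t • fderiv ℝ g x s)
      (fderiv ℝ g (x + t • s) s - fderiv ℝ g x s) t := by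
  have hline : HasDerivAt (fun t : ℝ => x + t • s) s t := by
    simpa using ((hasDerivAt_id t).smul_const s).const_add x
  have hlinear : HasDerivAt (fun t : ℝ => t • fderiv ℝ g x s) (fderiv ℝ g x s) t := by
    simpa using (hasDerivAt_id t).smul_const (fderiv ℝ g x s)
  exact (((hg _).hasFDerivAt.comp_hasDerivAt t hline).sub_const (g x)).sub hlinear

theorem norm_image_sub_sub_fderiv_le {L : ℝ} (hg : Differentiable ℝ g) {x : E}
    (hL : ∀ y, ‖fderiv ℝ g y - fderiv ℝ g x‖ ≤ L * ‖y - x‖) (s : E) :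
    ‖g (x + s) - g x - fderiv ℝ g x s‖ ≤ L / 2 * ‖s‖ ^ 2 := by
  have hbound : ∀ t : ℝ, HasDerivAt (fun t => L / 2 * ‖s‖ ^ 2 * t ^ 2) (L * ‖s‖ ^ 2 * t) t :=
    fun t => ((hasDerivAt_pow 2 t).const_mul (L / 2 * ‖s‖ ^ 2)).congr_deriv (by ring)
  have hderiv_le : ∀ t ∈ Ico (0 : ℝ) 1,
      ‖fderiv ℝ g (x + t • s) s - fderiv ℝ g x s‖ ≤ L * ‖s‖ ^ 2 * t := by
    intro t ht
    have hLt := hL (x + t • s)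
    rw [add_sub_cancel_left, norm_smul, Real.norm_of_nonneg ht.1] at hLt
    calc ‖fderiv ℝ g (x + t • s) s - fderiv ℝ g x s‖
        ≤ ‖fderiv ℝ g (x + t • s) - fderiv ℝ g x‖ * ‖s‖ := by
          exact (fderiv ℝ g (x + t • s) - fderiv ℝ g x).le_opNorm s
      _ ≤ L * (t * ‖s‖) * ‖s‖ := by gcongr
      _ = L * ‖s‖ ^ 2 * t := by ring
  have hremainder := hasDerivAt_taylorRemainder_segment hg x s
  simpa using image_norm_le_of_norm_deriv_right_le_deriv_boundary
    (fun t _ => (hremainder t).continuousAt.continuousWithinAt)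
    (fun t _ => (hremainder t).hasDerivWithinAt) (by simp) hbound hderiv_le
    (right_mem_Icc.2 zero_le_one)

end Taylor

theorem stmt15_general {d : ℕ} (f : EuclideanSpace ℝ (Fin d) → ℝ) (L₂ : ℝ)
    (hf : ContDiff ℝ 2 f)
    (hLip : ∀ x y : EuclideanSpace ℝ (Fin d),
      ‖fderiv ℝ (gradient f) x - fderiv ℝ (gradient f) y‖ ≤ L₂ * ‖x - y‖)
    (x s : EuclideanSpace ℝ (Fin d)) (lam η : ℝ)
    (hlam : 0 < lam)
    (hres : ‖fderiv ℝ (gradient f) x s + lam • s + gradient f x‖ ≤ η * lam * ‖s‖)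
    (hstep : L₂ * ‖s‖ ≤ lam) :
    ‖gradient f (x + s)‖ ≤ (1 + η + 1 / 2) * lam * ‖s‖ := by
  set g := gradient f
  have htaylor := norm_image_sub_sub_fderiv_le (differentiable_gradient_of_contDiff hf)
    (fun y => hLip y x) s
  calc ‖g (x + s)‖
      = ‖(g (x + s) - g x - fderiv ℝ g x s) + (fderiv ℝ g x s + lam • s + g x) - lam • s‖ := by
        congr 1; abel
    _ ≤ ‖g (x + s) - g x - fderiv ℝ g x s‖ + ‖fderiv ℝ g x s + lam • s + g x‖ + ‖lam • s‖ :=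
        norm_sub_le_of_le (norm_add_le _ _) le_rfl
    _ ≤ L₂ / 2 * ‖s‖ ^ 2 + η * lam * ‖s‖ + lam * ‖s‖ := by
        rw [norm_smul, Real.norm_of_nonneg hlam.le]; gcongr
    _ ≤ (1 + η + 1 / 2) * lam * ‖s‖ := by
        nlinarith [norm_nonneg s, mul_le_mul_of_nonneg_right hstep (norm_nonneg s)]

/-- new gradient bound after an inexact regularized Newton step.
For `f` with `L₂`-Lipschitz Hessian, if the inexact Newton residual condition and
`L₂‖s‖ ≤ λ` hold with `η ∈ (0, 5/6)`, then
`‖∇f(x+s)‖ ≤ (1 + η + 1/2)·λ·‖s‖`. -/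
theorem stmt15 {d : ℕ} (f : EuclideanSpace ℝ (Fin d) → ℝ) (L₂ : ℝ)
    (hf : ContDiff ℝ 2 f)
    (hLip : ∀ x y : EuclideanSpace ℝ (Fin d),
      ‖fderiv ℝ (gradient f) x - fderiv ℝ (gradient f) y‖ ≤ L₂ * ‖x - y‖)
    (x s : EuclideanSpace ℝ (Fin d)) (lam η : ℝ)
    (hlam : 0 < lam) (hη0 : 0 < η) (hη1 : η < 5 / 6)
    (hres : ‖fderiv ℝ (gradient f) x s + lam • s + gradient f x‖ ≤ η * lam * ‖s‖)
    (hstep : L₂ * ‖s‖ ≤ lam) :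
    ‖gradient f (x + s)‖ ≤ (1 + η + 1 / 2) * lam * ‖s‖ :=
  stmt15_general f L₂ hf hLip x s lam η hlam hres hstep
end

section
/- Let ν > 0 and let (Φ_k)_{k≥0} be a sequence of nonnegative reals satisfying Φ_{k+1} ≤ Φ_k − ν·Φ_k^{3/2} for all k ≥ 0. Then Φ_k ≤ 4/(ν²(k+2)²) for all k ≥ 0. -/
/-!
With `s k = ν √(Φ k)` the recursion becomes `s (k+1)² ≤ s k² (1 - s k)`, and the bound
`s k ≤ 2 / (k + 2)` propagates: if `t m ≤ 2` with `m ≥ 2`, then `t ≤ 1` and `t (m + 1) ≤ 2 + t`, so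
`t² (1 - t) (m + 1)² ≤ (2 + t)² (1 - t) = 4 - 3t² - t³ ≤ 4`.
-/

theorem sq_mul_one_sub_mul_sq_le {t m : ℝ} (ht : 0 ≤ t) (hm : 2 ≤ m) (htm : t * m ≤ 2) :
    t ^ 2 * (1 - t) * (m + 1) ^ 2 ≤ 4 := by
  have ht1 : t ≤ 1 := by nlinarith
  calc t ^ 2 * (1 - t) * (m + 1) ^ 2 = (t * m + t) ^ 2 * (1 - t) := by ring
    _ ≤ (2 + t) ^ 2 * (1 - t) := by gcongr
    _ = 4 - 3 * t ^ 2 - t ^ 3 := by ring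
    _ ≤ 4 := by linarith [sq_nonneg t, pow_nonneg ht 3]

theorem mul_add_two_le_two_of_sq_succ_le {s : ℕ → ℝ} (hs : ∀ k, 0 ≤ s k)
    (hrec : ∀ k, s (k + 1) ^ 2 ≤ s k ^ 2 * (1 - s k)) (k : ℕ) :
    s k * (k + 2) ≤ 2 := by
  induction k with
  | zero =>
    have : s 0 ≤ 1 := by
      by_contra! h
      have : s 0 ^ 2 * (1 - s 0) < 0 := mul_neg_of_pos_of_neg (by positivity) (by linarith)
      linarith [hrec 0, sq_nonneg (s 1)]
    norm_num
    linarith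
  | succ k ih =>
    have hm : (2 : ℝ) ≤ k + 2 := by linarith [(k.cast_nonneg : (0 : ℝ) ≤ k)]
    have hsq : (s (k + 1) * ((k + 1 : ℕ) + 2)) ^ 2 ≤ 2 ^ 2 := by
      push_cast
      calc (s (k + 1) * ((k : ℝ) + 1 + 2)) ^ 2 = s (k + 1) ^ 2 * ((k + 2) + 1) ^ 2 := by ring
        _ ≤ s k ^ 2 * (1 - s k) * ((k + 2) + 1) ^ 2 := by gcongr; exact hrec k
        _ ≤ 2 ^ 2 := by linarith [sq_mul_one_sub_mul_sq_le (hs k) hm ih]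
    exact (sq_le_sq₀ (by positivity [hs (k + 1)]) zero_le_two).1 hsq

/-- solving the 3/2-power recursion.
If `Φ_{k+1} ≤ Φ_k − ν·Φ_k^{3/2}` with `Φ_k ≥ 0`, then `Φ_k ≤ 4/(ν²(k+2)²)`. -/
theorem stmt16 (ν : ℝ) (hν : 0 < ν) (Φ : ℕ → ℝ)
    (hpos : ∀ k, 0 ≤ Φ k)
    (hrec : ∀ k, Φ (k + 1) ≤ Φ k - ν * Φ k ^ ((3 : ℝ) / 2)) :
    ∀ k, Φ k ≤ 4 / (ν ^ 2 * ((k : ℝ) + 2) ^ 2) := by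
  set s : ℕ → ℝ := fun k ↦ ν * √(Φ k) with hs_def
  have hsq (k : ℕ) : s k ^ 2 = ν ^ 2 * Φ k := by
    simp only [hs_def, mul_pow, Real.sq_sqrt (hpos k)]
  have hs_rec (k : ℕ) : s (k + 1) ^ 2 ≤ s k ^ 2 * (1 - s k) := by
    have h := hrec k
    rw [Real.rpow_div_two_eq_sqrt _ (hpos k), Real.rpow_ofNat] at h
    calc s (k + 1) ^ 2 = ν ^ 2 * Φ (k + 1) := hsq _
      _ ≤ ν ^ 2 * (Φ k - ν * √(Φ k) ^ 3) := by gcongr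
      _ = s k ^ 2 * (1 - s k) := by linear_combination (-ν ^ 2) * Real.sq_sqrt (hpos k)
  intro k
  have hs_nonneg (k : ℕ) : 0 ≤ s k := by positivity
  rw [le_div_iff₀ (by positivity)]
  calc Φ k * (ν ^ 2 * ((k : ℝ) + 2) ^ 2) = (s k * (k + 2)) ^ 2 := by rw [mul_pow, hsq]; ring
    _ ≤ 2 ^ 2 := by
      gcongr
      exact mul_add_two_le_two_of_sq_succ_le hs_nonneg hs_rec k
    _ = 4 := by norm_num
end

section
/- Let p > 2, b ≥ 0, and 0 ≤ q < 1. Let (u_k)_{k≥0} and (a_k)_{k≥0} be sequences of nonnegative reals such that u_{k+1} ≤ a_k(u_k + b) for all k ≥ 0, a_k ≤ q for all k ≥ 0, and a_k ≤ (k+2)^{−p} for all k ≥ 0. Then there exists C > 0 such that u_k ≤ C/(k+2)^{p−1} for all k ≥ 0; one may take C := 2^{p−1}(u_max + b) with u_max := u₀ + qb/(1−q). -/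
/-!
Since `a_k ≤ q < 1`, the recursion is dominated by the contraction `v ↦ q (v + b)`, whose
orbit from `u₀` never exceeds `u_max = u₀ + q b / (1 - q)`; hence `u_{k+1} ≤ (k+2)^{-p} (u_max + b)`,
and `(k+2)^{-p} ≤ 2^{p-1} / (k+3)^{p-1}` turns this into the claimed decay.
-/

open Real

lemma Real.rpow_neg_le_two_rpow_div_add_one_rpow {x p : ℝ} (hx : 1 ≤ x) (hp : 1 ≤ p) :
    x ^ (-p) ≤ 2 ^ (p - 1) / (x + 1) ^ (p - 1) := by
  have hx0 : 0 < x := by linarith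
  rw [rpow_neg hx0.le, ← one_div,
    div_le_div_iff₀ (rpow_pos_of_pos hx0 p) (rpow_pos_of_pos (by linarith) _), one_mul]
  calc (x + 1) ^ (p - 1) ≤ (2 * x) ^ (p - 1) :=
      rpow_le_rpow (by linarith) (by linarith) (by linarith)
    _ = 2 ^ (p - 1) * x ^ (p - 1) := mul_rpow zero_le_two hx0.le
    _ ≤ 2 ^ (p - 1) * x ^ p :=
      mul_le_mul_of_nonneg_left (rpow_le_rpow_of_exponent_le hx (by linarith)) (by positivity)

section Recursion

variable {b q : ℝ} {u a : ℕ → ℝ}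

lemma le_add_mul_div_one_sub_of_le_mul_add (hb : 0 ≤ b) (hq1 : q < 1) (hu0 : 0 ≤ u 0)
    (ha : ∀ k, 0 ≤ a k) (haq : ∀ k, a k ≤ q) (hrec : ∀ k, u (k + 1) ≤ a k * (u k + b)) (k : ℕ) :
    u k ≤ u 0 + q * b / (1 - q) := by
  have h1q : 0 < 1 - q := sub_pos.2 hq1
  set M := u 0 + q * b / (1 - q)
  have hMb : M + b = u 0 + b / (1 - q) := by
    simp only [M]; field_simp; ring
  have hMb0 : 0 ≤ M + b := by rw [hMb]; positivity
  have hqM : q * (M + b) ≤ M := by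
    have : q * (M + b) - M = (q - 1) * u 0 := by
      rw [hMb]; simp only [M]; field_simp; ring
    nlinarith
  induction k with
  | zero =>
    have hq0 : 0 ≤ q := (ha 0).trans (haq 0)
    simp only [M, le_add_iff_nonneg_right]; positivity
  | succ k ih =>
    calc u (k + 1) ≤ a k * (u k + b) := hrec k
      _ ≤ a k * (M + b) := mul_le_mul_of_nonneg_left (by linarith) (ha k)
      _ ≤ q * (M + b) := mul_le_mul_of_nonneg_right (haq k) hMb0
      _ ≤ M := hqM

lemma le_two_rpow_mul_div_rpow_of_le_mul_add {p M : ℝ} (hp : 1 ≤ p) (hb : 0 ≤ b)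
    (hu : ∀ k, 0 ≤ u k) (hM : ∀ k, u k ≤ M) (ha : ∀ k, 0 ≤ a k)
    (hrec : ∀ k, u (k + 1) ≤ a k * (u k + b)) (hap : ∀ k, a k ≤ ((k : ℝ) + 2) ^ (-p)) (k : ℕ) :
    u k ≤ 2 ^ (p - 1) * (M + b) / ((k : ℝ) + 2) ^ (p - 1) := by
  have hMb : 0 ≤ M + b := by linarith [hu 0, hM 0]
  cases k with
  | zero =>
    rw [Nat.cast_zero, zero_add, mul_div_cancel_left₀ _ (rpow_pos_of_pos two_pos _).ne']
    linarith [hM 0]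
  | succ k =>
    have hk : (1 : ℝ) ≤ k + 2 := by linarith [k.cast_nonneg (α := ℝ)]
    calc u (k + 1) ≤ a k * (u k + b) := hrec k
      _ ≤ a k * (M + b) := mul_le_mul_of_nonneg_left (by linarith [hM k]) (ha k)
      _ ≤ ((k : ℝ) + 2) ^ (-p) * (M + b) := mul_le_mul_of_nonneg_right (hap k) hMb
      _ ≤ 2 ^ (p - 1) / ((k : ℝ) + 2 + 1) ^ (p - 1) * (M + b) :=
        mul_le_mul_of_nonneg_right (rpow_neg_le_two_rpow_div_add_one_rpow hk hp) hMb
      _ = 2 ^ (p - 1) * (M + b) / (((k + 1 : ℕ) : ℝ) + 2) ^ (p - 1) := by push_cast; ring_nf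

end Recursion

theorem stmt17_general (p b q : ℝ) (hp : 2 < p) (hb : 0 ≤ b) (hq1 : q < 1)
    (u a : ℕ → ℝ) (hu : ∀ k, 0 ≤ u k) (ha : ∀ k, 0 ≤ a k)
    (hrec : ∀ k, u (k + 1) ≤ a k * (u k + b))
    (haq : ∀ k, a k ≤ q)
    (hap : ∀ k, a k ≤ ((k : ℝ) + 2) ^ (-p)) :
    (∃ C > 0, ∀ k, u k ≤ C / ((k : ℝ) + 2) ^ (p - 1)) ∧
      ∀ k, u k ≤ (2 : ℝ) ^ (p - 1) * ((u 0 + q * b / (1 - q)) + b)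
        / ((k : ℝ) + 2) ^ (p - 1) := by
  have hM := le_add_mul_div_one_sub_of_le_mul_add hb hq1 (hu 0) ha haq hrec
  have hdecay := le_two_rpow_mul_div_rpow_of_le_mul_add (by linarith) hb hu hM ha hrec hap
  refine ⟨⟨2 ^ (p - 1) * (u 0 + q * b / (1 - q) + b) + 1, ?_, fun k => ?_⟩, hdecay⟩
  · have : 0 ≤ u 0 + q * b / (1 - q) + b := by linarith [hu 0, hM 0]
    positivity
  · exact (hdecay k).trans
      (div_le_div_of_nonneg_right (by linarith) (rpow_pos_of_pos (by positivity) _).le)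

/-- comparison lemma: polynomial decay under a scheduled recursion.
If `u_{k+1} ≤ a_k(u_k + b)` with `a_k ≤ q < 1` and `a_k ≤ (k+2)^{−p}`, `p > 2`,
then `u_k ≤ C/(k+2)^{p−1}` for some `C > 0`; one may take
`C = 2^{p−1}(u_max + b)` with `u_max = u₀ + qb/(1−q)`. -/
theorem stmt17 (p b q : ℝ) (hp : 2 < p) (hb : 0 ≤ b) (hq0 : 0 ≤ q) (hq1 : q < 1)
    (u a : ℕ → ℝ) (hu : ∀ k, 0 ≤ u k) (ha : ∀ k, 0 ≤ a k)
    (hrec : ∀ k, u (k + 1) ≤ a k * (u k + b))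
    (haq : ∀ k, a k ≤ q)
    (hap : ∀ k, a k ≤ ((k : ℝ) + 2) ^ (-p)) :
    (∃ C > 0, ∀ k, u k ≤ C / ((k : ℝ) + 2) ^ (p - 1)) ∧
      ∀ k, u k ≤ (2 : ℝ) ^ (p - 1) * ((u 0 + q * b / (1 - q)) + b)
        / ((k : ℝ) + 2) ^ (p - 1) :=
  stmt17_general p b q hp hb hq1 u a hu ha hrec haq hap
end

section
/- Let f : ℝ^d → ℝ be convex and differentiable with a minimizer x⋆, and let D > 0, C > 0, λ > 0, and η ∈ (0, 1/12]. Let x ∈ ℝ^d with ‖x − x⋆‖ ≤ D and g := ∇f(x) ≠ 0, let s ∈ ℝ^d, and set x₊ := x + s. Assume: f(x₊) ≤ f(x) − (1 − η − 1/6)·λ·‖s‖²; ‖∇f(x₊)‖ ≤ (1 + η + 1/2)·λ·‖s‖; ‖∇f(x₊)‖ ≥ (1/4)·‖g‖; and λ ≤ C·√‖g‖. Then, with ν := (1 − η − 1/6)/(16·(1 + η + 1/2)²·C·D^{3/2}), one has f(x) − f(x₊) ≥ ν·(f(x) − f(x⋆))^{3/2}. -/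
/-!
Convexity gives `f x - f x⋆ ≤ ‖g‖ ‖x - x⋆‖ ≤ ‖g‖ D`, so it suffices to bound `‖g‖^{3/2}` by the
decrease. The steady-step condition and the bound on the new gradient give
`‖g‖ ≤ 4 (1 + η + 1/2) λ ‖s‖`; squaring and using `λ ≤ C √‖g‖` once yields
`‖g‖^{3/2} ≤ 16 (1 + η + 1/2)² C λ ‖s‖²`, and the descent condition bounds `λ ‖s‖²` by the
decrease divided by `1 - η - 1/6`.
-/

open Set

theorem ConvexOn.add_le_of_hasFDerivAt {E : Type*} [NormedAddCommGroup E] [NormedSpace ℝ E]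
    {f : E → ℝ} {f' : E →L[ℝ] ℝ} {x : E} (hf : ConvexOn ℝ univ f) (hf' : HasFDerivAt f f' x)
    (y : E) : f x + f' (y - x) ≤ f y := by
  let ℓ : ℝ →ᵃ[ℝ] E := AffineMap.lineMap x y
  have hline : ConvexOn ℝ univ (f ∘ ℓ) := by simpa using hf.comp_affineMap ℓ
  have hderiv : HasDerivAt (f ∘ ℓ) (f' (y - x)) 0 :=
    hf'.comp_hasDerivAt_of_eq 0 AffineMap.hasDerivAt_lineMap (by simp [ℓ])
  have hslope := hline.le_slope_of_hasDerivAt (mem_univ 0) (mem_univ 1) one_pos hderiv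
  simp only [slope_def_field, Function.comp_apply, ℓ, AffineMap.lineMap_apply_zero,
    AffineMap.lineMap_apply_one, sub_zero, div_one] at hslope
  linarith

theorem ConvexOn.sub_le_norm_gradient_mul_norm {E : Type*} [NormedAddCommGroup E]
    [InnerProductSpace ℝ E] [CompleteSpace E] {f : E → ℝ} {x : E}
    (hf : ConvexOn ℝ univ f) (hfx : DifferentiableAt ℝ f x) (y : E) :
    f x - f y ≤ ‖gradient f x‖ * ‖x - y‖ := by
  have hsupport :=
    hf.add_le_of_hasFDerivAt (hasGradientAt_iff_hasFDerivAt.mp hfx.hasGradientAt) y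
  rw [InnerProductSpace.toDual_apply_apply, ← neg_sub x y, inner_neg_right] at hsupport
  have hcs := real_inner_le_norm (gradient f x) (x - y)
  linarith

theorem rpow_three_halves_le_of_le_mul_sqrt {G B lam r C : ℝ} (hG : 0 < G) (hlam : 0 ≤ lam)
    (hGr : G ≤ B * lam * r) (hlamC : lam ≤ C * √G) :
    G ^ ((3 : ℝ) / 2) ≤ B ^ 2 * C * (lam * r ^ 2) := by
  have hsplit : G ^ 2 = √G * G ^ ((3 : ℝ) / 2) := by
    rw [Real.sqrt_eq_rpow, ← Real.rpow_add hG, ← Real.rpow_natCast]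
    norm_num
  have hsq : G ^ 2 ≤ √G * (B ^ 2 * C * (lam * r ^ 2)) :=
    calc G ^ 2 ≤ (B * lam * r) ^ 2 := pow_le_pow_left₀ hG.le hGr 2
      _ = B ^ 2 * r ^ 2 * lam * lam := by ring
      _ ≤ B ^ 2 * r ^ 2 * lam * (C * √G) := by gcongr
      _ = √G * (B ^ 2 * C * (lam * r ^ 2)) := by ring
  rw [hsplit] at hsq
  exact le_of_mul_le_mul_left hsq (Real.sqrt_pos.mpr hG)

/-- steady-step sharp decrease.
Under one-step descent, the new-gradient bound, the steady-step condition
`‖∇f(x₊)‖ ≥ (1/4)‖g‖`, and `λ ≤ C√‖g‖`, with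
`ν = (1 − η − 1/6)/(16·(1 + η + 1/2)²·C·D^{3/2})` one has
`f(x) − f(x₊) ≥ ν·(f(x) − f(x⋆))^{3/2}`. -/
theorem stmt18 {d : ℕ} (f : EuclideanSpace ℝ (Fin d) → ℝ)
    (hconv : ConvexOn ℝ Set.univ f)
    (hdiff : Differentiable ℝ f)
    (xstar : EuclideanSpace ℝ (Fin d)) (hmin : ∀ y, f xstar ≤ f y)
    (D C lam η : ℝ) (hD : 0 < D) (hC : 0 < C) (hlam : 0 < lam)
    (hη0 : 0 < η) (hη1 : η ≤ 1 / 12)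
    (x s : EuclideanSpace ℝ (Fin d))
    (hx : ‖x - xstar‖ ≤ D)
    (hg : gradient f x ≠ 0)
    (hdes : f (x + s) ≤ f x - (1 - η - 1 / 6) * lam * ‖s‖ ^ 2)
    (hgb : ‖gradient f (x + s)‖ ≤ (1 + η + 1 / 2) * lam * ‖s‖)
    (hsteady : (1 / 4) * ‖gradient f x‖ ≤ ‖gradient f (x + s)‖)
    (hlamC : lam ≤ C * Real.sqrt ‖gradient f x‖) :
    f x - f (x + s) ≥
      ((1 - η - 1 / 6) / (16 * (1 + η + 1 / 2) ^ 2 * C * D ^ ((3 : ℝ) / 2)))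
        * (f x - f xstar) ^ ((3 : ℝ) / 2) := by
  have ha : 0 < 1 - η - 1 / 6 := by linarith
  have hb : 0 < 1 + η + 1 / 2 := by linarith
  set G := ‖gradient f x‖
  set a : ℝ := 1 - η - 1 / 6
  set b : ℝ := 1 + η + 1 / 2
  have hG : 0 < G := norm_pos_iff.mpr hg
  have hgap : f x - f xstar ≤ G * D :=
    (hconv.sub_le_norm_gradient_mul_norm (hdiff x) xstar).trans (by gcongr)
  have hG32 : G ^ ((3 : ℝ) / 2) ≤ (4 * b) ^ 2 * C * (lam * ‖s‖ ^ 2) :=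
    rpow_three_halves_le_of_le_mul_sqrt hG hlam.le (by linarith) hlamC
  calc a / (16 * b ^ 2 * C * D ^ ((3 : ℝ) / 2)) * (f x - f xstar) ^ ((3 : ℝ) / 2)
      ≤ a / (16 * b ^ 2 * C * D ^ ((3 : ℝ) / 2)) * (G * D) ^ ((3 : ℝ) / 2) := by
        gcongr
        exact sub_nonneg.mpr (hmin x)
    _ = a * G ^ ((3 : ℝ) / 2) / ((4 * b) ^ 2 * C) := by
        rw [Real.mul_rpow hG.le hD.le]
        field_simp
        ring
    _ ≤ a * ((4 * b) ^ 2 * C * (lam * ‖s‖ ^ 2)) / ((4 * b) ^ 2 * C) := by gcongr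
    _ = a * lam * ‖s‖ ^ 2 := by field_simp
    _ ≤ f x - f (x + s) := by linarith
end
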